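/- Let 0 < a < 1 and b a natural number with a·b ≥ 1. Let ε > 0 and let N ≥ 1 be a natural number such that (a^N/(1−a))^{1/2} ≤ ε/2. Then the covering number of the unit ball B_W of the RKHS of the Weierstrass fractal kernel in C([−1,1]) satisfies 𝒞(ε, B_W) ≤ (1 + (4/ε)·(1/(1−a))^{1/2})^{2N}. -/

import Mathlib

open Real Metric
open scoped ENNReal

/-- The covering number of a set `A` in a metric space: the minimal number (in `ℕ∞`) of balls
of radius `ε` needed to cover `A`. -/
noncomputable def coveringNumber {X : Type*} [PseudoMetricSpace X] (ε : ℝ) (A : Set X) : ℕ∞ :=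
  sInf {n : ℕ∞ | ∃ t : Finset X, (t.card : ℕ∞) = n ∧ A ⊆ ⋃ c ∈ t, Metric.closedBall c ε}

/-- The image in `C([-1,1])` of the unit ball of the RKHS of the Weierstrass fractal kernel:
continuous functions `f(x) = ∑ₙ a^(n/2)(cₙ cos(bⁿπx) + dₙ sin(bⁿπx))` with square-summable
coefficients satisfying `∑ₙ (cₙ² + dₙ²) ≤ 1`. -/
def weierstrassBall (a : ℝ) (b : ℕ) : Set C(Set.Icc (-1 : ℝ) 1, ℝ) :=
  {f | ∃ c d : ℕ → ℝ, Summable (fun n => c n ^ 2 + d n ^ 2) ∧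
    (∑' n : ℕ, (c n ^ 2 + d n ^ 2)) ≤ 1 ∧
    ∀ x : Set.Icc (-1 : ℝ) 1, f x = ∑' n : ℕ, a ^ ((n : ℝ) / 2) *
      (c n * Real.cos ((b : ℝ) ^ n * π * (x : ℝ)) +
        d n * Real.sin ((b : ℝ) ^ n * π * (x : ℝ)))}

/-!
Truncating the series after `N` terms costs at most `√(∑_{n ≥ N} aⁿ) = √(aᴺ/(1-a))` in the sup
norm, by Cauchy–Schwarz against the coefficient tail, which has `ℓ²`-norm at most `1`. The
truncated sums are the functions `x ↦ ⟪v, φ(x)⟫` for coefficient vectors `v` in the unit ball of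
`ℝ^{2N}`, where `φ(x) = (a^{n/2} cos(bⁿπx), a^{n/2} sin(bⁿπx))_{n < N}` has
`‖φ(x)‖² = ∑_{n < N} aⁿ ≤ 1/(1-a)`; so they are the image of that ball under a
`√(1/(1-a))`-Lipschitz map. A volumetric `δ`-net of the unit ball of `ℝ^{2N}` with
`δ = ε / (2√(1/(1-a)))` has at most `(1 + 2/δ)^{2N}` points and is mapped to an `ε/2`-net of the
truncated sums.
-/

open MeasureTheory Module Finset
open scoped NNReal RealInnerProductSpace

section Packing

variable {E : Type*} [NormedAddCommGroup E] [NormedSpace ℝ E] [FiniteDimensional ℝ E]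

/-- Volume argument: the balls of radius `δ/2` around the points of `s` are disjoint and lie in
the ball of radius `1 + δ/2`. -/
lemma card_le_of_isSeparated_of_subset_closedBall {δ : ℝ≥0} (hδ : 0 < δ) {s : Finset E}
    (hs : (s : Set E) ⊆ closedBall 0 1) (hsep : IsSeparated δ (s : Set E)) :
    (s.card : ℝ) ≤ (1 + 2 / δ) ^ finrank ℝ E := by
  borelize E
  set d := finrank ℝ E
  set μ : Measure E := Measure.addHaar
  set r : ℝ := δ / 2
  have hr : 0 < r := by positivity
  have hdisj : (s : Set E).PairwiseDisjoint fun c => ball c r := by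
    intro c hc c' hc' hne
    have : (δ : ℝ) < dist c c' := by
      have h : (δ : ℝ≥0∞) < edist c c' := hsep hc hc' hne
      rw [edist_dist, ← ENNReal.ofReal_coe_nnreal] at h
      exact (ENNReal.ofReal_lt_ofReal_iff_of_nonneg δ.2).1 h
    exact ball_disjoint_ball (by simp only [r]; linarith)
  have hsub : (⋃ c ∈ s, ball c r) ⊆ ball (0 : E) (1 + r) := by
    refine Set.iUnion₂_subset fun c hc => ball_subset_ball' ?_
    have := mem_closedBall_zero_iff.1 (hs hc)
    rw [dist_zero_right]
    linarith
  have hvol : (s.card : ℝ≥0∞) * ENNReal.ofReal (r ^ d) * μ (ball 0 1) ≤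
      ENNReal.ofReal ((1 + r) ^ d) * μ (ball 0 1) :=
    calc (s.card : ℝ≥0∞) * ENNReal.ofReal (r ^ d) * μ (ball 0 1) = μ (⋃ c ∈ s, ball c r) := by
          rw [measure_biUnion_finset hdisj fun c _ => measurableSet_ball]
          simp only [μ.addHaar_ball_of_pos _ hr, Finset.sum_const, nsmul_eq_mul, mul_assoc, d]
      _ ≤ μ (ball 0 (1 + r)) := measure_mono hsub
      _ = ENNReal.ofReal ((1 + r) ^ d) * μ (ball 0 1) := μ.addHaar_ball_of_pos _ (by positivity)
  have hvol' : (s.card : ℝ) * r ^ d ≤ (1 + r) ^ d := by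
    have := (ENNReal.mul_le_mul_iff_left (measure_ball_pos μ (0 : E) one_pos).ne'
      measure_ball_lt_top.ne).1 hvol
    rwa [← ENNReal.ofReal_natCast, ← ENNReal.ofReal_mul (by positivity),
      ENNReal.ofReal_le_ofReal_iff (by positivity)] at this
  calc (s.card : ℝ) ≤ (1 + r) ^ d / r ^ d := by rwa [le_div_iff₀ (by positivity)]
    _ = (1 + 2 / δ) ^ d := by rw [← div_pow]; congr 1; field_simp; ring

lemma packingNumber_closedBall_le {δ : ℝ≥0} (hδ : 0 < δ) :
    packingNumber δ (closedBall (0 : E) 1) ≤ ⌊(1 + 2 / (δ : ℝ)) ^ finrank ℝ E⌋₊ := by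
  refine iSup₂_le fun C hC => iSup_le fun hsep => ?_
  by_contra! hlt
  obtain ⟨C', hC'C, hC'card⟩ := Set.exists_subset_encard_eq (Order.add_one_le_of_lt hlt)
  have hfin : C'.Finite := Set.finite_of_encard_eq_coe (by rw [hC'card]; rfl)
  have := card_le_of_isSeparated_of_subset_closedBall hδ (s := hfin.toFinset)
    (by simpa using hC'C.trans hC) (by simpa using hsep.subset hC'C)
  rw [← Set.ncard_eq_toFinset_card C' hfin, Set.ncard_def, hC'card] at this
  rw [← ENat.natCast_one, ← ENat.natCast_add, ENat.toNat_natCast] at this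
  exact (Nat.lt_floor_add_one _).not_ge (by exact_mod_cast this)

lemma exists_finset_card_le_closedBall_subset {δ : ℝ} (hδ : 0 < δ) :
    ∃ t : Finset E, (t.card : ℝ) ≤ (1 + 2 / δ) ^ finrank ℝ E ∧
      closedBall (0 : E) 1 ⊆ ⋃ c ∈ t, closedBall c δ := by
  lift δ to ℝ≥0 using hδ.le
  have hpack := packingNumber_closedBall_le (E := E) (mod_cast hδ)
  have hne : packingNumber δ (closedBall (0 : E) 1) ≠ ⊤ := ne_top_of_le_ne_top (by simp) hpack
  set M := maximalSeparatedSet δ (closedBall (0 : E) 1)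
  have hM : M.encard ≤ ⌊(1 + 2 / (δ : ℝ)) ^ finrank ℝ E⌋₊ := encard_maximalSeparatedSet hne ▸ hpack
  have hfin : M.Finite := Set.finite_of_encard_le_coe hM
  refine ⟨hfin.toFinset, ?_, ?_⟩
  · rw [← Set.ncard_eq_toFinset_card M hfin]
    have := (Set.encard_le_coe_iff_finite_ncard_le.1 hM).2
    exact (Nat.cast_le.2 this).trans (Nat.floor_le (by positivity))
  · simpa using isCover_iff_subset_iUnion_closedBall.1 (isCover_maximalSeparatedSet hne)

end Packing

lemma coveringNumber_le_card {X : Type*} [PseudoMetricSpace X] {ε : ℝ} {A : Set X} {t : Finset X}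
    (h : A ⊆ ⋃ c ∈ t, closedBall c ε) : coveringNumber ε A ≤ t.card :=
  sInf_le ⟨t, rfl, h⟩

lemma coveringNumber_le_card_of_lipschitzWith {X Y : Type*} [PseudoMetricSpace X]
    [PseudoMetricSpace Y] {s : Set X} {A : Set Y} {f : X → Y} {K : ℝ≥0} {δ η : ℝ} (t : Finset X)
    (ht : s ⊆ ⋃ c ∈ t, closedBall c δ) (hf : LipschitzWith K f)
    (hA : ∀ y ∈ A, ∃ x ∈ s, dist y (f x) ≤ η) :
    coveringNumber (η + K * δ) A ≤ t.card := by
  classical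
  refine (coveringNumber_le_card (t := t.image f) fun y hy => ?_).trans
    (mod_cast Finset.card_image_le)
  obtain ⟨x, hxs, hyx⟩ := hA y hy
  obtain ⟨c, hct, hxc⟩ := Set.mem_iUnion₂.1 (ht hxs)
  refine Set.mem_iUnion₂.2 ⟨f c, Finset.mem_image_of_mem f hct, ?_⟩
  calc dist y (f c) ≤ dist y (f x) + dist (f x) (f c) := dist_triangle _ _ _
    _ ≤ η + K * δ := add_le_add hyx ((hf.dist_le_mul x c).trans
        (mul_le_mul_of_nonneg_left (mem_closedBall.1 hxc) K.2))

lemma abs_mul_cos_add_mul_sin_le (p q θ : ℝ) :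
    |p * Real.cos θ + q * Real.sin θ| ≤ √(p ^ 2 + q ^ 2) :=
  Real.abs_le_sqrt <| by
    nlinarith [Real.sin_sq_add_cos_sq θ, sq_nonneg (p * Real.sin θ - q * Real.cos θ)]

lemma rpow_natCast_div_two {a : ℝ} (ha : 0 ≤ a) (n : ℕ) : a ^ ((n : ℝ) / 2) = √(a ^ n) := by
  rw [Real.sqrt_eq_rpow, ← Real.rpow_natCast, ← Real.rpow_mul ha]
  ring_nf

section CauchySchwarz

variable {ι : Type*} {f g : ι → ℝ}

lemma summable_sqrt_mul_sqrt (hf : ∀ i, 0 ≤ f i) (hg : ∀ i, 0 ≤ g i) (hfs : Summable f)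
    (hgs : Summable g) : Summable fun i => √(f i) * √(g i) := by
  refine ((hfs.add hgs).div_const 2).of_nonneg_of_le (fun i => by positivity) fun i => ?_
  nlinarith [sq_nonneg (√(f i) - √(g i)), Real.sq_sqrt (hf i), Real.sq_sqrt (hg i)]

lemma tsum_sqrt_mul_sqrt_le (hf : ∀ i, 0 ≤ f i) (hg : ∀ i, 0 ≤ g i) (hfs : Summable f)
    (hgs : Summable g) : ∑' i, √(f i) * √(g i) ≤ √(∑' i, f i) * √(∑' i, g i) :=
  (summable_sqrt_mul_sqrt hf hg hfs hgs).tsum_le_of_sum_le fun s =>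
    (Real.sum_sqrt_mul_sqrt_le s hf hg).trans <| by
      gcongr
      · exact hfs.sum_le_tsum s fun i _ => hf i
      · exact hgs.sum_le_tsum s fun i _ => hg i

end CauchySchwarz

section Truncation

variable {N : ℕ}

def truncCoeffs (N : ℕ) (c d : ℕ → ℝ) : EuclideanSpace ℝ (Fin N × Bool) :=
  WithLp.toLp 2 fun p => bif p.2 then d p.1 else c p.1

lemma norm_truncCoeffs (c d : ℕ → ℝ) :
    ‖truncCoeffs N c d‖ = √(∑ n ∈ range N, (c n ^ 2 + d n ^ 2)) := by
  rw [EuclideanSpace.norm_eq, Fintype.sum_prod_type, ← Fin.sum_univ_eq_sum_range]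
  simp [truncCoeffs, add_comm]

lemma inner_truncCoeffs (c d c' d' : ℕ → ℝ) :
    ⟪truncCoeffs N c d, truncCoeffs N c' d'⟫ = ∑ n ∈ range N, (c n * c' n + d n * d' n) := by
  rw [PiLp.inner_apply, Fintype.sum_prod_type, ← Fin.sum_univ_eq_sum_range]
  simp [truncCoeffs, add_comm, mul_comm]

end Truncation

noncomputable section Weierstrass

variable {a : ℝ} {b N : ℕ} {c d : ℕ → ℝ}

def weierstrassTerm (a : ℝ) (b : ℕ) (c d : ℕ → ℝ) (n : ℕ) (x : ℝ) : ℝ :=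
  a ^ ((n : ℝ) / 2) * (c n * Real.cos ((b : ℝ) ^ n * π * x) + d n * Real.sin ((b : ℝ) ^ n * π * x))

def weierstrassFeature (a : ℝ) (b N : ℕ) (x : ℝ) : EuclideanSpace ℝ (Fin N × Bool) :=
  truncCoeffs N (fun n => a ^ ((n : ℝ) / 2) * Real.cos ((b : ℝ) ^ n * π * x))
    (fun n => a ^ ((n : ℝ) / 2) * Real.sin ((b : ℝ) ^ n * π * x))

lemma inner_truncCoeffs_weierstrassFeature (x : ℝ) :
    ⟪truncCoeffs N c d, weierstrassFeature a b N x⟫ =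
      ∑ n ∈ range N, weierstrassTerm a b c d n x := by
  rw [weierstrassFeature, inner_truncCoeffs]
  exact sum_congr rfl fun n _ => by rw [weierstrassTerm]; ring

lemma norm_weierstrassFeature_le (ha0 : 0 ≤ a) (ha1 : a < 1) (x : ℝ) :
    ‖weierstrassFeature a b N x‖ ≤ √(1 / (1 - a)) := by
  rw [weierstrassFeature, norm_truncCoeffs]
  gcongr
  calc ∑ n ∈ range N, ((a ^ ((n : ℝ) / 2) * Real.cos ((b : ℝ) ^ n * π * x)) ^ 2 +
        (a ^ ((n : ℝ) / 2) * Real.sin ((b : ℝ) ^ n * π * x)) ^ 2)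
      = ∑ n ∈ range N, a ^ n := sum_congr rfl fun n _ => by
        rw [mul_pow, mul_pow, ← mul_add, Real.cos_sq_add_sin_sq, mul_one,
          rpow_natCast_div_two ha0, Real.sq_sqrt (by positivity)]
    _ ≤ ∑' n, a ^ n := (summable_geometric_of_lt_one ha0 ha1).sum_le_tsum _ fun n _ => by positivity
    _ = 1 / (1 - a) := by rw [tsum_geometric_of_lt_one ha0 ha1, one_div]

lemma continuous_weierstrassFeature : Continuous (weierstrassFeature a b N) :=
  (PiLp.continuous_toLp 2 _).comp <| continuous_pi fun p => by
    cases p.2 <;> simp only [cond_false, cond_true] <;> fun_prop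

def weierstrassPartialSum (a : ℝ) (b N : ℕ) (v : EuclideanSpace ℝ (Fin N × Bool)) :
    C(Set.Icc (-1 : ℝ) 1, ℝ) :=
  ⟨fun x => ⟪v, weierstrassFeature a b N x⟫,
    continuous_const.inner (continuous_weierstrassFeature.comp continuous_subtype_val)⟩

lemma lipschitzWith_weierstrassPartialSum (ha0 : 0 ≤ a) (ha1 : a < 1) :
    LipschitzWith (√(1 / (1 - a))).toNNReal (weierstrassPartialSum a b N) := by
  refine LipschitzWith.of_dist_le_mul fun v w => ?_
  rw [Real.coe_toNNReal _ (Real.sqrt_nonneg _)]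
  refine (ContinuousMap.dist_le (by positivity)).2 fun x => ?_
  simp only [weierstrassPartialSum, ContinuousMap.coe_mk]
  rw [Real.dist_eq, ← inner_sub_left, dist_eq_norm, mul_comm]
  exact (abs_real_inner_le_norm _ _).trans
    (mul_le_mul_of_nonneg_left (norm_weierstrassFeature_le ha0 ha1 x) (norm_nonneg _))

lemma abs_weierstrassTerm_le (ha : 0 ≤ a) (n : ℕ) (x : ℝ) :
    |weierstrassTerm a b c d n x| ≤ √(a ^ n) * √(c n ^ 2 + d n ^ 2) := by
  rw [weierstrassTerm, abs_mul, abs_of_nonneg (by positivity), rpow_natCast_div_two ha]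
  exact mul_le_mul_of_nonneg_left (abs_mul_cos_add_mul_sin_le _ _ _) (Real.sqrt_nonneg _)

lemma summable_weierstrassTerm (ha0 : 0 ≤ a) (ha1 : a < 1)
    (hcd : Summable fun n => c n ^ 2 + d n ^ 2) (x : ℝ) :
    Summable fun n => weierstrassTerm a b c d n x :=
  .of_norm_bounded (summable_sqrt_mul_sqrt (fun n => by positivity) (fun n => by positivity)
    (summable_geometric_of_lt_one ha0 ha1) hcd) (abs_weierstrassTerm_le ha0 · x)

lemma abs_tsum_weierstrassTerm_add_le (ha0 : 0 ≤ a) (ha1 : a < 1)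
    (hcd : Summable fun n => c n ^ 2 + d n ^ 2) (N : ℕ) (x : ℝ) :
    |∑' n, weierstrassTerm a b c d (n + N) x| ≤
      √(a ^ N / (1 - a)) * √(∑' n, (c (n + N) ^ 2 + d (n + N) ^ 2)) := by
  have hgeom : Summable fun n => a ^ (n + N) :=
    (summable_nat_add_iff N).2 (summable_geometric_of_lt_one ha0 ha1)
  have hcdN : Summable fun n => c (n + N) ^ 2 + d (n + N) ^ 2 := (summable_nat_add_iff N).2 hcd
  calc |∑' n, weierstrassTerm a b c d (n + N) x|
      ≤ ∑' n, √(a ^ (n + N)) * √(c (n + N) ^ 2 + d (n + N) ^ 2) :=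
        tsum_of_norm_bounded (f := fun n => weierstrassTerm a b c d (n + N) x)
          (summable_sqrt_mul_sqrt (fun n => by positivity) (fun n => by positivity) hgeom
            hcdN).hasSum fun n => abs_weierstrassTerm_le ha0 _ x
    _ ≤ √(∑' n, a ^ (n + N)) * √(∑' n, (c (n + N) ^ 2 + d (n + N) ^ 2)) :=
        tsum_sqrt_mul_sqrt_le (fun n => by positivity) (fun n => by positivity) hgeom hcdN
    _ = √(a ^ N / (1 - a)) * √(∑' n, (c (n + N) ^ 2 + d (n + N) ^ 2)) := by
        simp only [pow_add, tsum_mul_right, tsum_geometric_of_lt_one ha0 ha1, ← div_eq_inv_mul]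

lemma exists_dist_weierstrassPartialSum_le (ha0 : 0 ≤ a) (ha1 : a < 1) (N : ℕ)
    {f : C(Set.Icc (-1 : ℝ) 1, ℝ)} (hf : f ∈ weierstrassBall a b) :
    ∃ v ∈ closedBall (0 : EuclideanSpace ℝ (Fin N × Bool)) 1,
      dist f (weierstrassPartialSum a b N v) ≤ √(a ^ N / (1 - a)) := by
  obtain ⟨c, d, hcd, hcd1, hf⟩ := hf
  have hhead : ∑ n ∈ range N, (c n ^ 2 + d n ^ 2) ≤ 1 :=
    (hcd.sum_le_tsum _ fun n _ => by positivity).trans hcd1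
  have htail : ∑' n, (c (n + N) ^ 2 + d (n + N) ^ 2) ≤ 1 :=
    (tsum_comp_le_tsum_of_inj hcd (fun n => by positivity) (add_left_injective N)).trans hcd1
  refine ⟨truncCoeffs N c d, ?_, (ContinuousMap.dist_le (by positivity)).2 fun x => ?_⟩
  · rw [mem_closedBall_zero_iff, norm_truncCoeffs]
    exact Real.sqrt_le_one.2 hhead
  · have hsplit : f x - weierstrassPartialSum a b N (truncCoeffs N c d) x =
        ∑' n, weierstrassTerm a b c d (n + N) x := by
      simp only [weierstrassPartialSum, ContinuousMap.coe_mk, inner_truncCoeffs_weierstrassFeature]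
      rw [hf x]
      change ∑' n, weierstrassTerm a b c d n x - _ = _
      rw [← (summable_weierstrassTerm ha0 ha1 hcd x).sum_add_tsum_nat_add N]
      exact add_sub_cancel_left _ _
    rw [Real.dist_eq, hsplit]
    calc _ ≤ √(a ^ N / (1 - a)) * √(∑' n, (c (n + N) ^ 2 + d (n + N) ^ 2)) :=
          abs_tsum_weierstrassTerm_add_le ha0 ha1 hcd N x
      _ ≤ √(a ^ N / (1 - a)) := mul_le_of_le_one_right (Real.sqrt_nonneg _)
          (Real.sqrt_le_one.2 htail)

end Weierstrass

theorem weierstrass_coveringNumber_upper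
    (a : ℝ) (b : ℕ) (ha0 : 0 < a) (ha1 : a < 1)
    (ε : ℝ) (hε : 0 < ε) (N : ℕ)
    (hNε : Real.sqrt (a ^ N / (1 - a)) ≤ ε / 2) :
    (coveringNumber ε (weierstrassBall a b) : ℝ≥0∞) ≤
      ENNReal.ofReal ((1 + (4 / ε) * Real.sqrt (1 / (1 - a))) ^ (2 * N)) := by
  set K := √(1 / (1 - a))
  have hK : 0 < K := Real.sqrt_pos.2 (one_div_pos.2 (sub_pos.2 ha1))
  obtain ⟨t, htcard, hnet⟩ := exists_finset_card_le_closedBall_subset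
    (E := EuclideanSpace ℝ (Fin N × Bool)) (show 0 < ε / 2 / K by positivity)
  have happrox : ∀ f ∈ weierstrassBall a b, ∃ v ∈ closedBall 0 1,
      dist f (weierstrassPartialSum a b N v) ≤ ε / 2 := fun f hf => by
    obtain ⟨v, hv, hdist⟩ := exists_dist_weierstrassPartialSum_le ha0.le ha1 N hf
    exact ⟨v, hv, hdist.trans hNε⟩
  have hcov := coveringNumber_le_card_of_lipschitzWith t hnet
    (lipschitzWith_weierstrassPartialSum ha0.le ha1) happrox
  rw [Real.coe_toNNReal _ hK.le, mul_div_cancel₀ _ hK.ne', add_halves] at hcov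
  have hdim : finrank ℝ (EuclideanSpace ℝ (Fin N × Bool)) = 2 * N := by
    simp [Fintype.card_prod, mul_comm]
  calc (coveringNumber ε (weierstrassBall a b) : ℝ≥0∞) ≤ ENNReal.ofReal t.card := by
        simpa using ENat.toENNReal_le.2 hcov
    _ ≤ _ := by
        refine ENNReal.ofReal_le_ofReal (htcard.trans_eq ?_)
        rw [hdim]
        congr 2
        field_simp
        norm_num
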